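/- arXiv:2410.20396 — 4 statements merged into one kernel-verified Lean document; each statement's English description precedes it below -/
import Mathlib

section
/- Let E and F be real Banach spaces, let Φ : E → F be a map, let L : E → F be a continuous linear isomorphism whose inverse has operator norm at most C > 0, and define N : E → F by N(x) = Φ(x) − Φ(0) − L(x). Assume there exist r > 0 and q > 0 such that ‖N(x) − N(y)‖ ≤ q·‖x + y‖·‖x − y‖ for all x, y in the open ball of radius r centered at 0 in E, and assume ‖Φ(0)‖ < min{r/(2C), 1/(4C²q)}. Then there exists a unique x in the closed ball of radius 2C·‖Φ(0)‖ centered at 0 in E such that Φ(x) = 0. -/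
/-!
Zeros of `Φ` are the fixed points of the chord map `G x = x - L⁻¹ Φ x`, whose increments are
`-L⁻¹` applied to those of `N`. On the closed ball of radius `ρ = 2C‖Φ 0‖` this makes `G`
Lipschitz with constant `2Cqρ = 4C²q‖Φ 0‖ < 1`, and taking `y = 0` in the quadratic bound gives
`‖G x - G 0‖ ≤ Cqρ² < ρ/2`, while `‖G 0‖ ≤ C‖Φ 0‖ = ρ/2`; so `G` is a contraction of the ball.
-/

open Set Metric Function NNReal

theorem LipschitzOnWith.existsUnique_isFixedPt {α : Type*} [MetricSpace α] {f : α → α}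
    {s : Set α} {K : ℝ≥0} (hf : LipschitzOnWith K f s) (hK : K < 1) (hsc : IsComplete s)
    (hsf : MapsTo f s s) (hs : s.Nonempty) : ∃! x, x ∈ s ∧ IsFixedPt f x := by
  have hfc : ContractingWith K (hsf.restrict f s s) := ⟨hK, hf.mapsToRestrict hsf⟩
  obtain ⟨x₀, hx₀⟩ := hs
  obtain ⟨x, hxs, hfx, -⟩ := hfc.exists_fixedPoint' hsc hsf hx₀ (edist_ne_top _ _)
  refine ⟨x, ⟨hxs, hfx⟩, fun y ⟨hys, hfy⟩ => ?_⟩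
  exact congrArg Subtype.val <|
    hfc.fixedPoint_unique' (x := ⟨y, hys⟩) (y := ⟨x, hxs⟩) (Subtype.ext hfy) (Subtype.ext hfx)

section ChordMap

variable {E F : Type*} [NormedAddCommGroup E] [NormedSpace ℝ E]
  [NormedAddCommGroup F] [NormedSpace ℝ F]

def chordMap (Φ : E → F) (L : E ≃L[ℝ] F) (x : E) : E := x - L.symm (Φ x)

variable {Φ : E → F} {L : E ≃L[ℝ] F}

theorem isFixedPt_chordMap_iff {x : E} : IsFixedPt (chordMap Φ L) x ↔ Φ x = 0 := by
  simp [IsFixedPt, chordMap]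

theorem chordMap_sub_chordMap (x y : E) :
    chordMap Φ L x - chordMap Φ L y = -L.symm (Φ x - Φ y - L (x - y)) := by
  simp only [chordMap, map_sub, ContinuousLinearEquiv.symm_apply_apply]
  abel

variable {C q ρ : ℝ} (hL : ‖(L.symm : F →L[ℝ] E)‖ ≤ C)
  (hrem : ∀ x ∈ closedBall (0 : E) ρ, ∀ y ∈ closedBall (0 : E) ρ,
    ‖Φ x - Φ y - L (x - y)‖ ≤ q * ‖x + y‖ * ‖x - y‖)
include hL hrem

theorem norm_chordMap_sub_chordMap_le {x y : E} (hx : x ∈ closedBall 0 ρ)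
    (hy : y ∈ closedBall 0 ρ) :
    ‖chordMap Φ L x - chordMap Φ L y‖ ≤ C * q * ‖x + y‖ * ‖x - y‖ := by
  have hC : 0 ≤ C := (norm_nonneg _).trans hL
  calc ‖chordMap Φ L x - chordMap Φ L y‖ = ‖L.symm (Φ x - Φ y - L (x - y))‖ := by
        rw [chordMap_sub_chordMap, norm_neg]
    _ ≤ C * ‖Φ x - Φ y - L (x - y)‖ := (L.symm : F →L[ℝ] E).le_of_opNorm_le hL _
    _ ≤ C * (q * ‖x + y‖ * ‖x - y‖) := by gcongr; exact hrem x hx y hy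
    _ = C * q * ‖x + y‖ * ‖x - y‖ := by ring

variable (hq : 0 ≤ q)
include hq

theorem lipschitzOnWith_chordMap :
    LipschitzOnWith (2 * C * q * ρ).toNNReal (chordMap Φ L) (closedBall 0 ρ) := by
  have hCq : 0 ≤ C * q := mul_nonneg ((norm_nonneg _).trans hL) hq
  refine LipschitzOnWith.of_dist_le' fun x hx y hy => ?_
  rw [dist_eq_norm, dist_eq_norm]
  have hsum : ‖x + y‖ ≤ 2 * ρ := by
    rw [mem_closedBall_zero_iff] at hx hy
    linarith [norm_add_le x y]
  calc ‖chordMap Φ L x - chordMap Φ L y‖ ≤ C * q * ‖x + y‖ * ‖x - y‖ :=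
        norm_chordMap_sub_chordMap_le hL hrem hx hy
    _ ≤ C * q * (2 * ρ) * ‖x - y‖ := by gcongr
    _ = 2 * C * q * ρ * ‖x - y‖ := by ring

theorem mapsTo_chordMap (hρ : C * ‖Φ 0‖ + C * q * ρ ^ 2 ≤ ρ) :
    MapsTo (chordMap Φ L) (closedBall 0 ρ) (closedBall 0 ρ) := by
  intro x hx
  have hx' : ‖x‖ ≤ ρ := mem_closedBall_zero_iff.mp hx
  have hρ0 : 0 ≤ ρ := (norm_nonneg x).trans hx'
  have hCq : 0 ≤ C * q := mul_nonneg ((norm_nonneg _).trans hL) hq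
  have hG0 : ‖chordMap Φ L 0‖ ≤ C * ‖Φ 0‖ := by
    simpa [chordMap] using (L.symm : F →L[ℝ] E).le_of_opNorm_le hL (Φ 0)
  have hGx := norm_chordMap_sub_chordMap_le hL hrem hx (mem_closedBall_self hρ0)
  rw [add_zero, sub_zero] at hGx
  rw [mem_closedBall_zero_iff]
  calc ‖chordMap Φ L x‖ ≤ ‖chordMap Φ L x - chordMap Φ L 0‖ + ‖chordMap Φ L 0‖ :=
        norm_le_norm_sub_add _ _
    _ ≤ C * q * ρ * ρ + C * ‖Φ 0‖ := add_le_add (hGx.trans (by gcongr)) hG0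
    _ ≤ ρ := by linarith

theorem existsUnique_zero_mem_closedBall [CompleteSpace E] (hK : 2 * C * q * ρ < 1)
    (hρ : C * ‖Φ 0‖ + C * q * ρ ^ 2 ≤ ρ) :
    ∃! x : E, x ∈ closedBall 0 ρ ∧ Φ x = 0 := by
  have hC : 0 ≤ C := (norm_nonneg _).trans hL
  have hρ0 : 0 ≤ ρ := le_trans (by positivity) hρ
  simpa only [isFixedPt_chordMap_iff] using
    (lipschitzOnWith_chordMap hL hrem hq).existsUnique_isFixedPt (Real.toNNReal_lt_one.mpr hK)
      isClosed_closedBall.isComplete (mapsTo_chordMap hL hrem hq hρ) (nonempty_closedBall.mpr hρ0)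

end ChordMap

theorem quantitative_IFT_general
    {E F : Type*} [NormedAddCommGroup E] [NormedSpace ℝ E] [CompleteSpace E]
    [NormedAddCommGroup F] [NormedSpace ℝ F]
    (Φ : E → F) (L : E ≃L[ℝ] F) (C : ℝ) (hC : 0 < C)
    (hL : ‖(L.symm : F →L[ℝ] E)‖ ≤ C)
    (N : E → F) (hN : ∀ x, N x = Φ x - Φ 0 - L x)
    (r q : ℝ) (hq : 0 < q)
    (hLip : ∀ x ∈ Metric.ball (0 : E) r, ∀ y ∈ Metric.ball (0 : E) r,
      ‖N x - N y‖ ≤ q * ‖x + y‖ * ‖x - y‖)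
    (hΦ0 : ‖Φ 0‖ < min (r / (2 * C)) (1 / (4 * C ^ 2 * q))) :
    ∃! x : E, x ∈ Metric.closedBall (0 : E) (2 * C * ‖Φ 0‖) ∧ Φ x = 0 := by
  obtain ⟨hr, hK⟩ := lt_min_iff.mp hΦ0
  rw [lt_div_iff₀ (by positivity)] at hr
  rw [lt_div_iff₀ (by positivity)] at hK
  have hball : closedBall (0 : E) (2 * C * ‖Φ 0‖) ⊆ ball 0 r :=
    closedBall_subset_ball (by linarith)
  refine existsUnique_zero_mem_closedBall hL (fun x hx y hy => ?_) hq.le ?_ ?_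
  · have hNsub : N x - N y = Φ x - Φ y - L (x - y) := by
      simp only [hN, map_sub]; abel
    exact hNsub ▸ hLip x (hball hx) y (hball hy)
  · nlinarith
  · have : 0 ≤ C * ‖Φ 0‖ := by positivity
    nlinarith

/-- **Quantitative Implicit Function Theorem** (Lemma 4.5).
Let `E` and `F` be real Banach spaces, `Φ : E → F`, `L : E ≃L[ℝ] F` a continuous linear
isomorphism whose inverse has operator norm at most `C > 0`, and `N x = Φ x - Φ 0 - L x`.
If `‖N x - N y‖ ≤ q ‖x + y‖ ‖x - y‖` on the ball of radius `r` and
`‖Φ 0‖ < min (r / (2C)) (1 / (4 C² q))`, then there is a unique zero of `Φ` in the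
closed ball of radius `2 C ‖Φ 0‖` about the origin. -/
theorem quantitative_IFT
    {E F : Type*} [NormedAddCommGroup E] [NormedSpace ℝ E] [CompleteSpace E]
    [NormedAddCommGroup F] [NormedSpace ℝ F] [CompleteSpace F]
    (Φ : E → F) (L : E ≃L[ℝ] F) (C : ℝ) (hC : 0 < C)
    (hL : ‖(L.symm : F →L[ℝ] E)‖ ≤ C)
    (N : E → F) (hN : ∀ x, N x = Φ x - Φ 0 - L x)
    (r q : ℝ) (hr : 0 < r) (hq : 0 < q)
    (hLip : ∀ x ∈ Metric.ball (0 : E) r, ∀ y ∈ Metric.ball (0 : E) r,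
      ‖N x - N y‖ ≤ q * ‖x + y‖ * ‖x - y‖)
    (hΦ0 : ‖Φ 0‖ < min (r / (2 * C)) (1 / (4 * C ^ 2 * q))) :
    ∃! x : E, x ∈ Metric.closedBall (0 : E) (2 * C * ‖Φ 0‖) ∧ Φ x = 0 :=
  quantitative_IFT_general Φ L C hC hL N hN r q hq hLip hΦ0
end

section
/- There exists a constant C > 0 such that for every real d ≥ 1 and every x ∈ ℝ³ with ‖x‖ ≤ d/2, the function φ_d is differentiable at x and the operator norm of its (Fréchet) derivative at x satisfies ‖Dφ_d(x)‖ ≤ C/d². -/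
/-!
Each term `1/(2‖x - p‖)` has gradient of norm `1/(2‖x - p‖²)`, since `‖· - p‖` is 1-Lipschitz.
The points `pᵢ` lie on the sphere of radius `d`, so `‖x - pᵢ‖ ≥ d/2` when `‖x‖ ≤ d/2`, and the
four terms together give `‖Dφ_d(x)‖ ≤ 4 · 2/d² = 8/d²`.
-/

/-- The four characterising points `p₁, p₂, p₋₁, p₋₂` of the multi-Taub–NUT space `X_d`,
at the vertices of a square of side `√2·d` in Euclidean `ℝ³`. -/
noncomputable def ghPoints (d : ℝ) : Fin 4 → EuclideanSpace ℝ (Fin 3) :=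
  ![ !₂[Real.sqrt 2 / 2 * d, Real.sqrt 2 / 2 * d, 0],
     !₂[Real.sqrt 2 / 2 * d, -(Real.sqrt 2 / 2 * d), 0],
     !₂[-(Real.sqrt 2 / 2 * d), -(Real.sqrt 2 / 2 * d), 0],
     !₂[-(Real.sqrt 2 / 2 * d), Real.sqrt 2 / 2 * d, 0] ]

/-- The Gibbons–Hawking potential `φ_d(x) = 1 + Σᵢ 1/(2‖x − pᵢ‖)`. -/
noncomputable def ghPotential (d : ℝ) (x : EuclideanSpace ℝ (Fin 3)) : ℝ :=
  1 + ∑ i : Fin 4, 1 / (2 * ‖x - ghPoints d i‖)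

theorem norm_fderiv_norm_sub_le {E : Type*} [NormedAddCommGroup E] [NormedSpace ℝ E]
    (p x : E) : ‖fderiv ℝ (fun y => ‖y - p‖) x‖ ≤ 1 := by
  simpa only [dist_eq_norm, NNReal.coe_one] using
    norm_fderiv_le_of_lipschitz ℝ (LipschitzWith.dist_left p) (x₀ := x)

section PointCharge

variable {E : Type*} [NormedAddCommGroup E] [InnerProductSpace ℝ E] {x : E}

theorem hasFDerivAt_one_div_two_mul_norm_sub {p : E} (hx : x ≠ p) :
    HasFDerivAt (fun y => 1 / (2 * ‖y - p‖))
      ((-1 / (2 * ‖x - p‖ ^ 2)) • fderiv ℝ (fun y => ‖y - p‖) x) x := by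
  have hpos : 0 < ‖x - p‖ := norm_pos_iff.mpr (sub_ne_zero.mpr hx)
  have hinv : HasDerivAt (fun t : ℝ => 1 / (2 * t)) (-1 / (2 * ‖x - p‖ ^ 2)) ‖x - p‖ := by
    rw [show -1 / (2 * ‖x - p‖ ^ 2) = 2⁻¹ * -(‖x - p‖ ^ 2)⁻¹ by ring]
    simpa only [one_div, mul_inv] using (hasDerivAt_inv hpos.ne').const_mul (2⁻¹ : ℝ)
  have hnorm : DifferentiableAt ℝ (fun y => ‖y - p‖) x :=
    (differentiableAt_id.sub_const p).norm ℝ (sub_ne_zero.mpr hx)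
  exact (hinv.comp_hasFDerivAt x hnorm.hasFDerivAt :)

theorem norm_fderiv_one_div_two_mul_norm_sub_le {p : E} (hx : x ≠ p) :
    ‖fderiv ℝ (fun y => 1 / (2 * ‖y - p‖)) x‖ ≤ 1 / (2 * ‖x - p‖ ^ 2) := by
  rw [(hasFDerivAt_one_div_two_mul_norm_sub hx).fderiv, norm_smul, Real.norm_eq_abs,
    abs_div, abs_neg, abs_one, abs_of_nonneg (by positivity)]
  exact mul_le_of_le_one_right (by positivity) (norm_fderiv_norm_sub_le p x)

variable {ι : Type*} [Fintype ι] {p : ι → E}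

theorem differentiableAt_one_add_sum_one_div_two_mul_norm_sub (hx : ∀ i, x ≠ p i) :
    DifferentiableAt ℝ (fun y => 1 + ∑ i, 1 / (2 * ‖y - p i‖)) x :=
  (HasFDerivAt.fun_sum fun i _ =>
    hasFDerivAt_one_div_two_mul_norm_sub (hx i)).differentiableAt.const_add 1

theorem norm_fderiv_one_add_sum_one_div_two_mul_norm_sub_le {r : ℝ} (hr : 0 < r)
    (hx : ∀ i, r ≤ ‖x - p i‖) :
    ‖fderiv ℝ (fun y => 1 + ∑ i, 1 / (2 * ‖y - p i‖)) x‖ ≤ Fintype.card ι / (2 * r ^ 2) := by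
  have hne i : x ≠ p i := sub_ne_zero.mp (norm_pos_iff.mp (hr.trans_le (hx i)))
  rw [fderiv_const_add, fderiv_fun_sum fun i _ =>
    (hasFDerivAt_one_div_two_mul_norm_sub (hne i)).differentiableAt]
  calc ‖∑ i, fderiv ℝ (fun y => 1 / (2 * ‖y - p i‖)) x‖
      ≤ ∑ i, ‖fderiv ℝ (fun y => 1 / (2 * ‖y - p i‖)) x‖ := norm_sum_le _ _
    _ ≤ ∑ _i : ι, 1 / (2 * r ^ 2) := Finset.sum_le_sum fun i _ =>
        (norm_fderiv_one_div_two_mul_norm_sub_le (hne i)).trans (by gcongr; exact hx i)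
    _ = Fintype.card ι / (2 * r ^ 2) := by
        rw [Finset.sum_const, Finset.card_univ, nsmul_eq_mul, mul_one_div]

end PointCharge

theorem norm_ghPoints {d : ℝ} (hd : 0 ≤ d) (i : Fin 4) : ‖ghPoints d i‖ = d := by
  have hsq : (√2 / 2 * d) ^ 2 = d ^ 2 / 2 := by
    rw [mul_pow, div_pow, Real.sq_sqrt zero_le_two]; ring
  fin_cases i <;>
  · rw [EuclideanSpace.norm_eq]
    simp [ghPoints, Fin.sum_univ_three, hsq, Real.sqrt_sq hd]

theorem half_le_norm_sub_ghPoints {d : ℝ} (hd : 0 ≤ d) {x : EuclideanSpace ℝ (Fin 3)}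
    (hx : ‖x‖ ≤ d / 2) (i : Fin 4) : d / 2 ≤ ‖x - ghPoints d i‖ := by
  have := norm_sub_norm_le (ghPoints d i) x
  rw [norm_ghPoints hd, norm_sub_rev] at this
  linarith

/-- First-order part of Lemma 2.2: for `‖x‖ ≤ d/2` the potential `φ_d` is differentiable
at `x` and `‖Dφ_d(x)‖ ≤ C/d²`. -/
theorem ghPotential_deriv_estimate :
    ∃ C > 0, ∀ d : ℝ, 1 ≤ d → ∀ x : EuclideanSpace ℝ (Fin 3), ‖x‖ ≤ d / 2 →
      DifferentiableAt ℝ (ghPotential d) x ∧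
      ‖fderiv ℝ (ghPotential d) x‖ ≤ C / d ^ 2 := by
  refine ⟨8, by norm_num, fun d hd x hx => ?_⟩
  have hd0 : 0 < d := one_pos.trans_le hd
  have hfar := half_le_norm_sub_ghPoints hd0.le hx
  have hne i : x ≠ ghPoints d i :=
    sub_ne_zero.mp (norm_pos_iff.mp ((half_pos hd0).trans_le (hfar i)))
  refine ⟨differentiableAt_one_add_sum_one_div_two_mul_norm_sub hne, ?_⟩
  calc ‖fderiv ℝ (ghPotential d) x‖ ≤ Fintype.card (Fin 4) / (2 * (d / 2) ^ 2) :=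
        norm_fderiv_one_add_sum_one_div_two_mul_norm_sub_le (half_pos hd0) hfar
    _ = 8 / d ^ 2 := by
        rw [Fintype.card_fin]; field_simp; norm_num
end

section
/- Let i denote the imaginary quaternion unit and for a quaternion q let q̄ denote its conjugate. For every nonzero purely imaginary quaternion v (i.e. with zero real part): (a) there exists q ∈ ℍ with q̄·i·q = v; (b) any such q satisfies ‖q‖² = ‖v‖; and (c) if q and q′ both satisfy q̄·i·q = v = q̄′·i·q′, then there exists θ ∈ ℝ with q′ = (cos θ + (sin θ)·i)·q. In other words, the fibre of the map q ↦ q̄·i·q over any nonzero purely imaginary quaternion is a single nontrivial orbit of the circle action q ↦ e^{iθ}·q. -/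
noncomputable def quatI : Quaternion ℝ := ⟨0, 1, 0, 0⟩

/-!
Write `μ q = q̄ i q`. Then `‖μ q‖ = ‖q‖²` and `μ (u q) = q̄ (ū i u) q`, so two points of one fibre
differ by a left factor `u` with `ū i u = i`. Such a `u` has norm one, hence `ū = u⁻¹` and `u`
commutes with `i`: it lies on the unit circle of `ℂ ⊂ ℍ`, i.e. `u = e^{iθ}`.
A point over a purely imaginary `v` is found by rescaling `‖v‖ i + v`, whose image is
`2 (‖v‖ + v₁) v`; this degenerates exactly when `v` is a non-positive multiple of `i`,
where `√‖v‖ j` works instead.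
-/

open scoped Quaternion

section StarConjugation

variable {R : Type*}

theorem norm_star_mul_mul_self [NormedDivisionRing R] [StarRing R] [NormedStarGroup R]
    (a q : R) : ‖star q * a * q‖ = ‖q‖ ^ 2 * ‖a‖ := by
  rw [norm_mul, norm_mul, norm_star]
  ring

theorem norm_eq_one_of_star_mul_mul_self_eq [NormedDivisionRing R] [StarRing R]
    [NormedStarGroup R] {a u : R} (ha : a ≠ 0) (h : star u * a * u = a) : ‖u‖ = 1 := by
  have hsq : ‖u‖ ^ 2 * ‖a‖ = 1 * ‖a‖ := by rw [← norm_star_mul_mul_self, h, one_mul]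
  rwa [mul_left_inj' (norm_ne_zero_iff.2 ha), pow_eq_one_iff_of_nonneg (norm_nonneg u) two_ne_zero]
    at hsq

theorem exists_eq_mul_and_star_mul_mul_self_eq [DivisionRing R] [StarRing R]
    {a q q' : R} (hq : q ≠ 0) (h : star q' * a * q' = star q * a * q) :
    ∃ u, q' = u * q ∧ star u * a * u = a := by
  set u := q' * q⁻¹
  have hq' : q' = u * q := (inv_mul_cancel_right₀ hq q').symm
  refine ⟨u, hq', mul_right_cancel₀ hq (mul_left_cancel₀ (star_ne_zero.2 hq) ?_)⟩
  rw [hq', star_mul] at h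
  simpa only [mul_assoc] using h

end StarConjugation

namespace Quaternion

theorem star_smul_mul_mul_smul (c : ℝ) (a q : ℍ) :
    star (c • q) * a * (c • q) = c ^ 2 • (star q * a * q) := by
  rw [star_smul, smul_mul_assoc, smul_mul_assoc, mul_smul_comm, smul_smul, sq]

theorem mul_star_eq_one_of_norm_eq_one {u : ℍ} (hu : ‖u‖ = 1) : u * star u = 1 := by
  rw [self_mul_star, normSq_eq_norm_mul_self, hu, mul_one, coe_one]

theorem commute_of_star_mul_mul_self_eq {a u : ℍ} (hu : ‖u‖ = 1) (h : star u * a * u = a) :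
    Commute a u :=
  calc a * u = u * star u * a * u := by rw [mul_star_eq_one_of_norm_eq_one hu, one_mul]
    _ = u * (star u * a * u) := by simp only [mul_assoc]
    _ = u * a := by rw [h]

theorem norm_coeComplex (z : ℂ) : ‖(z : ℍ)‖ = ‖z‖ := by
  rw [← Real.sqrt_mul_self (norm_nonneg (z : ℍ)), ← normSq_eq_norm_mul_self, normSq_def',
    Complex.norm_def, Complex.normSq_apply]
  simp [sq]

theorem sq_norm_of_re_eq_zero {v : ℍ} (hv : v.re = 0) :
    ‖v‖ ^ 2 = v.imI ^ 2 + v.imJ ^ 2 + v.imK ^ 2 := by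
  rw [sq, ← normSq_eq_norm_mul_self, normSq_def', hv]
  ring

end Quaternion

@[simp] theorem quatI_re : quatI.re = 0 := rfl
@[simp] theorem quatI_imI : quatI.imI = 1 := rfl
@[simp] theorem quatI_imJ : quatI.imJ = 0 := rfl
@[simp] theorem quatI_imK : quatI.imK = 0 := rfl

theorem coeComplex_I_eq_quatI : ((Complex.I : ℂ) : ℍ) = quatI := by
  ext <;> simp

theorem norm_quatI : ‖quatI‖ = 1 := by
  rw [← coeComplex_I_eq_quatI, Quaternion.norm_coeComplex, Complex.norm_I]

theorem quatI_ne_zero : quatI ≠ 0 :=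
  norm_ne_zero_iff.1 (norm_quatI ▸ one_ne_zero)

theorem exists_coeComplex_eq_of_commute_quatI {u : ℍ} (h : Commute quatI u) :
    ∃ z : ℂ, (z : ℍ) = u := by
  have hK : u.imK = 0 := by simpa [eq_comm, self_eq_neg] using congrArg QuaternionAlgebra.imJ h.eq
  have hJ : u.imJ = 0 := by simpa [self_eq_neg] using congrArg QuaternionAlgebra.imK h.eq
  exact ⟨⟨u.re, u.imI⟩, by ext <;> simp [hJ, hK]⟩

theorem coeComplex_exp_mul_I (θ : ℝ) :
    ((Complex.exp (θ * Complex.I) : ℂ) : ℍ) = Real.cos θ + Real.sin θ * quatI := by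
  ext <;> simp [Complex.exp_ofReal_mul_I_re, Complex.exp_ofReal_mul_I_im]

theorem exists_eq_cos_add_sin_mul_quatI {u : ℍ} (hcomm : Commute quatI u) (hu : ‖u‖ = 1) :
    ∃ θ : ℝ, u = Real.cos θ + Real.sin θ * quatI := by
  obtain ⟨z, rfl⟩ := exists_coeComplex_eq_of_commute_quatI hcomm
  obtain ⟨θ, rfl⟩ := (Complex.norm_eq_one_iff z).1 (by rwa [← Quaternion.norm_coeComplex])
  exact ⟨θ, coeComplex_exp_mul_I θ⟩

theorem star_mul_quatI_mul_norm_smul_quatI_add {v : ℍ} (hv : v.re = 0) :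
    star (‖v‖ • quatI + v) * quatI * (‖v‖ • quatI + v) = (2 * (‖v‖ + v.imI)) • v := by
  have hnorm := Quaternion.sq_norm_of_re_eq_zero hv
  ext <;> simp [hv] <;> linarith

noncomputable def quatJ : ℍ := ⟨0, 0, 1, 0⟩

theorem star_quatJ_mul_quatI_mul_quatJ : star quatJ * quatI * quatJ = -quatI := by
  ext <;> simp <;> simp [quatJ]

theorem exists_star_mul_quatI_mul_self_eq {v : ℍ} (hv : v.re = 0) :
    ∃ q : ℍ, star q * quatI * q = v := by
  have hnorm := Quaternion.sq_norm_of_re_eq_zero hv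
  have hnonneg : 0 ≤ ‖v‖ + v.imI := by nlinarith [norm_nonneg v]
  rcases hnonneg.eq_or_lt with h | h
  · obtain ⟨hJ, hK⟩ : v.imJ = 0 ∧ v.imK = 0 := by
      have hx : ‖v‖ ^ 2 = v.imI ^ 2 := by rw [show ‖v‖ = -v.imI by linarith, neg_sq]
      constructor <;> nlinarith [sq_nonneg v.imJ, sq_nonneg v.imK]
    refine ⟨√‖v‖ • quatJ, ?_⟩
    rw [Quaternion.star_smul_mul_mul_smul, Real.sq_sqrt (norm_nonneg v),
      star_quatJ_mul_quatI_mul_quatJ]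
    ext <;> simp [hv, hJ, hK]
    linarith
  · have hpos : 0 < 2 * (‖v‖ + v.imI) := by positivity
    refine ⟨(√(2 * (‖v‖ + v.imI)))⁻¹ • (‖v‖ • quatI + v), ?_⟩
    rw [Quaternion.star_smul_mul_mul_smul, star_mul_quatI_mul_norm_smul_quatI_add hv, smul_smul,
      inv_pow, Real.sq_sqrt hpos.le, inv_mul_cancel₀ hpos.ne', one_smul]

theorem quaternion_moment_fibre_general (v : Quaternion ℝ) (hre : v.re = 0) :
    (∃ q : Quaternion ℝ, star q * quatI * q = v) ∧
    (∀ q : Quaternion ℝ, star q * quatI * q = v → ‖q‖ ^ 2 = ‖v‖) ∧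
    (∀ q q' : Quaternion ℝ, star q * quatI * q = v → star q' * quatI * q' = v →
      ∃ θ : ℝ, q' = ((Real.cos θ : ℝ) + (Real.sin θ : ℝ) * quatI) * q) := by
  refine ⟨exists_star_mul_quatI_mul_self_eq hre, fun q hq => ?_, fun q q' hq hq' => ?_⟩
  · rw [← hq, norm_star_mul_mul_self, norm_quatI, mul_one]
  rcases eq_or_ne q 0 with rfl | hq0
  · subst hq
    have hq'0 : q' = 0 := by simpa [quatI_ne_zero] using hq'
    exact ⟨0, by simp [hq'0]⟩
  obtain ⟨u, rfl, hu⟩ := exists_eq_mul_and_star_mul_mul_self_eq hq0 (hq'.trans hq.symm)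
  have hu1 := norm_eq_one_of_star_mul_mul_self_eq quatI_ne_zero hu
  obtain ⟨θ, rfl⟩ :=
    exists_eq_cos_add_sin_mul_quatI (Quaternion.commute_of_star_mul_mul_self_eq hu1 hu) hu1
  exact ⟨θ, rfl⟩

/-- Section 2.3: the fibre of the hyperkähler moment map `q ↦ q̄·i·q` over any nonzero
purely imaginary quaternion `v` is a single nontrivial orbit of the circle action
`q ↦ e^{iθ}·q`: (a) there is a solution `q`; (b) any solution satisfies `‖q‖² = ‖v‖`;
(c) any two solutions differ by multiplication by `cos θ + (sin θ)·i`. -/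
theorem quaternion_moment_fibre (v : Quaternion ℝ) (hv : v ≠ 0) (hre : v.re = 0) :
    (∃ q : Quaternion ℝ, star q * quatI * q = v) ∧
    (∀ q : Quaternion ℝ, star q * quatI * q = v → ‖q‖ ^ 2 = ‖v‖) ∧
    (∀ q q' : Quaternion ℝ, star q * quatI * q = v → star q' * quatI * q' = v →
      ∃ θ : ℝ, q' = ((Real.cos θ : ℝ) + (Real.sin θ : ℝ) * quatI) * q) :=
  quaternion_moment_fibre_general v hre
end

section
/- Let u : ℝ² → ℝ be twice continuously differentiable, bounded, 2π-periodic in its second variable (u(x, t + 2π) = u(x, t) for all x, t), and harmonic, i.e. ∂²u/∂x² + ∂²u/∂t² = 0 at every point. Then u is constant. -/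
/-!
Regarded as a function of `x + t i ∈ ℂ`, `u` is a bounded harmonic function on the whole plane,
hence constant by Liouville's theorem for harmonic functions: it is the real part of an entire
function `F`, and `exp ∘ F` is then bounded and entire.
-/

open Real Complex InnerProductSpace Laplacian Set Bornology

variable {F : Type*} [NormedAddCommGroup F] [NormedSpace ℝ F]

section PartialDerivatives

variable {g : ℂ → F} {z : ℂ}

theorem DifferentiableAt.fderiv_one_eq_deriv (hg : DifferentiableAt ℝ g z) :
    fderiv ℝ g z 1 = deriv (fun s : ℝ => g (s + z.im * I)) z.re := by
  have hline : HasDerivAt (fun s : ℝ => (s : ℂ) + z.im * I) 1 z.re :=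
    ofRealCLM.hasDerivAt.add_const _
  rw [← re_add_im z] at hg
  have h := hg.hasFDerivAt.comp_hasDerivAt z.re hline
  rw [re_add_im] at h
  exact h.deriv.symm

theorem DifferentiableAt.fderiv_I_eq_deriv (hg : DifferentiableAt ℝ g z) :
    fderiv ℝ g z I = deriv (fun s : ℝ => g (z.re + s * I)) z.im := by
  have hline : HasDerivAt (fun s : ℝ => (z.re : ℂ) + s * I) I z.im := by
    simpa using (ofRealCLM.hasDerivAt.mul_const I).const_add (z.re : ℂ)
  rw [← re_add_im z] at hg
  have h := hg.hasFDerivAt.comp_hasDerivAt z.im hline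
  rw [re_add_im] at h
  exact h.deriv.symm

end PartialDerivatives

theorem Complex.laplacian_eq_deriv_deriv_add_deriv_deriv {u : ℝ → ℝ → F}
    (hu : ContDiff ℝ 2 (Function.uncurry u)) (z : ℂ) :
    Δ (fun w : ℂ => u w.re w.im) z =
      deriv (fun s => deriv (fun s' => u s' z.im) s) z.re +
        deriv (fun s => deriv (fun s' => u z.re s') s) z.im := by
  set f : ℂ → F := fun w => u w.re w.im
  have hf : ContDiff ℝ 2 f := hu.comp equivRealProdCLM.contDiff
  have hf₁ : Differentiable ℝ f := hf.differentiable (by norm_num)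
  have hf₂ : Differentiable ℝ (fderiv ℝ f) :=
    (hf.fderiv_right (m := 1) (by norm_num)).differentiable (by norm_num)
  have hpartial (v : ℂ) : Differentiable ℝ fun w => fderiv ℝ f w v := fun w =>
    (hf₂ w).clm_apply (differentiableAt_const v)
  have hsecond (v : ℂ) :
      fderiv ℝ (fderiv ℝ f) z v v = fderiv ℝ (fun w => fderiv ℝ f w v) z v := by
    rw [fderiv_clm_apply (hf₂ z) (differentiableAt_const v)]
    simp
  rw [laplacian_eq_iteratedFDeriv_complexPlane]
  simp only [iteratedFDeriv_two_apply, Matrix.cons_val_zero, Matrix.cons_val_one, hsecond]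
  rw [(hpartial 1 z).fderiv_one_eq_deriv, (hpartial I z).fderiv_I_eq_deriv]
  congr 1
  · congr 1; funext s
    rw [(hf₁ _).fderiv_one_eq_deriv]
    simp [f]
  · congr 1; funext s
    rw [(hf₁ _).fderiv_I_eq_deriv]
    simp [f]

theorem bounded_harmonic_on_cylinder_constant_general (u : ℝ → ℝ → ℝ)
    (hreg : ContDiff ℝ 2 (Function.uncurry u))
    (hbdd : ∃ M : ℝ, ∀ x t : ℝ, |u x t| ≤ M)
    (hharm : ∀ x t : ℝ,
      deriv (fun s => deriv (fun s' => u s' t) s) x +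
        deriv (fun s => deriv (fun s' => u x s') s) t = 0) :
    ∃ c : ℝ, ∀ x t : ℝ, u x t = c := by
  set f : ℂ → ℝ := fun z => u z.re z.im
  have hf_harm : HarmonicOnNhd f univ := fun _ _ =>
    ⟨(hreg.comp equivRealProdCLM.contDiff).contDiffAt, Filter.Eventually.of_forall fun z => by
      rw [laplacian_eq_deriv_deriv_add_deriv_deriv hreg, hharm, Pi.zero_apply]⟩
  have hf_bdd : IsBounded (range f) := by
    obtain ⟨M, hM⟩ := hbdd
    exact isBounded_iff_forall_norm_le.2 ⟨M, by rintro _ ⟨z, rfl⟩; exact hM _ _⟩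
  refine ⟨u 0 0, fun x t => ?_⟩
  simpa [f] using bounded_harmonic_on_complex_plane_is_constant f hf_harm hf_bdd (x + t * I) 0

/-- Liouville-type theorem on the flat cylinder `ℝ × S¹` (Proposition 4.3): a bounded,
`C²`, `2π`-periodic-in-`t`, harmonic function `u(x,t)` on `ℝ²` is constant. -/
theorem bounded_harmonic_on_cylinder_constant (u : ℝ → ℝ → ℝ)
    (hreg : ContDiff ℝ 2 (Function.uncurry u))
    (hbdd : ∃ M : ℝ, ∀ x t : ℝ, |u x t| ≤ M)
    (hper : ∀ x t : ℝ, u x (t + 2 * π) = u x t)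
    (hharm : ∀ x t : ℝ,
      deriv (fun s => deriv (fun s' => u s' t) s) x +
        deriv (fun s => deriv (fun s' => u x s') s) t = 0) :
    ∃ c : ℝ, ∀ x t : ℝ, u x t = c :=
  bounded_harmonic_on_cylinder_constant_general u hreg hbdd hharm
end
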